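/- For any positive integer n and real sequence defined by a_i satisfying a_{i+1} ≥ a_i + (1/n)(OPT − a_i) with a_0 ≥ 0 and OPT ≥ 0, it holds that OPT − a_n ≤ (1 − 1/n)^n · (OPT − a_0), and hence a_n ≥ (1 − 1/e)·OPT whenever a_0 = 0. -/
import Mathlib


/-- The recursion underlying the `(1 − 1/e)` greedy guarantee: if
`a_{i+1} ≥ a_i + (1/n)(OPT − a_i)` for all `i`, with `a_0 ≥ 0` and `OPT ≥ 0`, then
`OPT − a_n ≤ (1 − 1/n)^n (OPT − a_0)`, and hence `a_n ≥ (1 − 1/e)·OPT` when `a_0 = 0`. -/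
theorem greedy_recursion_bound (n : ℕ) (hn : 0 < n) (a : ℕ → ℝ) (OPT : ℝ)
    (ha0 : 0 ≤ a 0) (hOPT : 0 ≤ OPT)
    (hrec : ∀ i, a i + (1 / (n : ℝ)) * (OPT - a i) ≤ a (i + 1)) :
    OPT - a n ≤ (1 - 1 / (n : ℝ)) ^ n * (OPT - a 0) ∧
      (a 0 = 0 → (1 - 1 / Real.exp 1) * OPT ≤ a n) := by
  have hn1 : (1 : ℝ) ≤ (n : ℝ) := by exact_mod_cast hn
  have hb0 : (0 : ℝ) ≤ 1 - 1 / (n : ℝ) := by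
    have : 1 / (n : ℝ) ≤ 1 := by
      rw [div_le_one (by linarith)]; exact hn1
    linarith
  have key : ∀ m, OPT - a m ≤ (1 - 1 / (n : ℝ)) ^ m * (OPT - a 0) := by
    intro m
    induction m with
    | zero => simp
    | succ m ih =>
      have h1 : OPT - a (m + 1) ≤ (1 - 1 / (n : ℝ)) * (OPT - a m) := by
        have := hrec m; ring_nf; ring_nf at this ⊢; nlinarith [this]
      calc OPT - a (m + 1) ≤ (1 - 1 / (n : ℝ)) * (OPT - a m) := h1
        _ ≤ (1 - 1 / (n : ℝ)) * ((1 - 1 / (n : ℝ)) ^ m * (OPT - a 0)) :=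
          mul_le_mul_of_nonneg_left ih hb0
        _ = (1 - 1 / (n : ℝ)) ^ (m + 1) * (OPT - a 0) := by ring
  refine ⟨key n, fun h0 => ?_⟩
  have hpow : (1 - 1 / (n : ℝ)) ^ n ≤ 1 / Real.exp 1 := by
    have hstep : (1 : ℝ) - 1 / n ≤ Real.exp (-(1 / n)) := by
      have := Real.add_one_le_exp (-(1 / (n : ℝ))); linarith
    calc (1 - 1 / (n : ℝ)) ^ n ≤ Real.exp (-(1 / n)) ^ n :=
          pow_le_pow_left₀ hb0 hstep n
      _ = Real.exp (-(1 / n) * n) := by rw [← Real.exp_nat_mul]; ring_nf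
      _ = Real.exp (-1) := by
          congr 1
          field_simp
      _ = 1 / Real.exp 1 := by rw [Real.exp_neg]; simp
  have := key n
  rw [h0, sub_zero] at this
  have h2 : (1 - 1 / (n : ℝ)) ^ n * OPT ≤ (1 / Real.exp 1) * OPT :=
    mul_le_mul_of_nonneg_right hpow hOPT
  nlinarith
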